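/- If |F| = m and aTD(F) denotes the average teaching dimension then C¹(F) ≥ |X| − aTD(F); in particular, if every f ∈ F has teaching dimension at most t, then some f ∈ F has 1-certificate complexity at least |X| − t. -/
import Mathlib


variable {X : Type*} [Fintype X] [DecidableEq X]

/-- `f` and `g` agree on all points of `S`. -/
def AgreeOn (f g : X → Bool) (S : Finset X) : Prop := ∀ x ∈ S, f x = g x

/-- `S` is a teaching set for `f` w.r.t. `F`: `f` is the unique member of `F`
consistent with `f` on `S`. -/
def IsTeachingSet (F : Finset (X → Bool)) (f : X → Bool) (S : Finset X) : Prop :=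
  ∀ g ∈ F, AgreeOn f g S → g = f

/-- Teaching dimension of `f` w.r.t. `F`: minimum size of a teaching set. -/
noncomputable def TD (F : Finset (X → Bool)) (f : X → Bool) : ℕ :=
  sInf {n | ∃ S : Finset X, IsTeachingSet F f S ∧ S.card = n}

/-- `S` is a 1-certificate for `f` w.r.t. `F`: every function agreeing with `f` on `S`
belongs to `F`. -/
def IsOneCert (F : Finset (X → Bool)) (f : X → Bool) (S : Finset X) : Prop :=
  ∀ g : X → Bool, AgreeOn f g S → g ∈ F

/-- 1-certificate complexity of `f` w.r.t. `F`. -/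
noncomputable def C1 (F : Finset (X → Bool)) (f : X → Bool) : ℕ :=
  sInf {n | ∃ S : Finset X, IsOneCert F f S ∧ S.card = n}

/-- `S` is a 0-certificate for `f` w.r.t. `F`: no member of `F` agrees with `f` on `S`. -/
def IsZeroCert (F : Finset (X → Bool)) (f : X → Bool) (S : Finset X) : Prop :=
  ∀ g ∈ F, ¬ AgreeOn f g S

/-- 0-certificate complexity of `f` w.r.t. `F`. -/
noncomputable def C0 (F : Finset (X → Bool)) (f : X → Bool) : ℕ :=
  sInf {n | ∃ S : Finset X, IsZeroCert F f S ∧ S.card = n}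

lemma key_td_c1 (F : Finset (X → Bool)) (f : X → Bool) (hf : f ∈ F) :
    Fintype.card X ≤ TD F f + C1 F f := by
  have hTD : TD F f ∈ {n | ∃ S : Finset X, IsTeachingSet F f S ∧ S.card = n} := by
    apply Nat.sInf_mem
    exact ⟨Finset.univ.card, Finset.univ,
      fun g _ h => funext fun x => (h x (Finset.mem_univ x)).symm, rfl⟩
  have hC1 : C1 F f ∈ {n | ∃ S : Finset X, IsOneCert F f S ∧ S.card = n} := by
    apply Nat.sInf_mem
    refine ⟨Finset.univ.card, Finset.univ, fun g h => ?_, rfl⟩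
    have : g = f := funext fun x => (h x (Finset.mem_univ x)).symm
    exact this ▸ hf
  obtain ⟨T, hT, hTcard⟩ := hTD
  obtain ⟨S, hS, hScard⟩ := hC1
  by_contra hlt
  push_neg at hlt
  have hcard : (T ∪ S).card < Fintype.card X := by
    calc (T ∪ S).card ≤ T.card + S.card := Finset.card_union_le T S
    _ < Fintype.card X := by omega
  obtain ⟨x, hx⟩ : ∃ x, x ∉ T ∪ S := by
    by_contra h'
    push_neg at h'
    have : T ∪ S = Finset.univ := Finset.eq_univ_of_forall h'
    rw [this, Finset.card_univ] at hcard
    omega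
  have hxT : x ∉ T := fun h => hx (Finset.mem_union_left _ h)
  have hxS : x ∉ S := fun h => hx (Finset.mem_union_right _ h)
  set g : X → Bool := Function.update f x (!f x) with hg
  have hgF : g ∈ F := by
    apply hS
    intro y hy
    have hyx : y ≠ x := fun h => hxS (h ▸ hy)
    simp [hg, Function.update_of_ne hyx]
  have hgf : g = f := by
    apply hT g hgF
    intro y hy
    have hyx : y ≠ x := fun h => hxT (h ▸ hy)
    simp [hg, Function.update_of_ne hyx]
  have : g x = f x := by rw [hgf]
  simp [hg] at this

/-- C¹(F) ≥ |X| − aTD(F); in particular, if every f ∈ F has teaching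
dimension at most t, some f ∈ F has 1-certificate complexity at least |X| − t. -/
theorem c1_ge_card_sub_aTD (F : Finset (X → Bool)) (hF : F.Nonempty) :
    ((Fintype.card X : ℚ) - (∑ f ∈ F, (TD F f : ℚ)) / F.card ≤ ((F.sup (C1 F) : ℕ) : ℚ)) ∧
    (∀ t : ℕ, (∀ f ∈ F, TD F f ≤ t) →
      ∃ f ∈ F, Fintype.card X - t ≤ C1 F f) := by
  constructor
  · set M : ℕ := F.sup (C1 F) with hM
    have hn : (0:ℚ) < F.card := by
      exact_mod_cast Finset.card_pos.mpr hF
    have key2 : ((Fintype.card X : ℚ) - M) * F.card ≤ ∑ f ∈ F, (TD F f : ℚ) := by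
      calc ((Fintype.card X : ℚ) - M) * F.card
          = ∑ _f ∈ F, ((Fintype.card X : ℚ) - M) := by
            rw [Finset.sum_const, nsmul_eq_mul, mul_comm]
      _ ≤ ∑ f ∈ F, (TD F f : ℚ) := by
            apply Finset.sum_le_sum
            intro f hf
            have h1 := key_td_c1 F f hf
            have h2 : C1 F f ≤ M := Finset.le_sup hf
            have h3 : Fintype.card X ≤ TD F f + M := by omega
            have h4 : ((Fintype.card X : ℚ)) ≤ (TD F f : ℚ) + (M : ℚ) := by
              exact_mod_cast h3
            linarith
    have := (le_div_iff₀ hn).mpr key2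
    linarith
  · intro t ht
    obtain ⟨f, hf⟩ := hF
    refine ⟨f, hf, ?_⟩
    have h1 := key_td_c1 F f hf
    have h2 := ht f hf
    omega
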